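/- arXiv:2407.12760 — 4 statements merged into one kernel-verified Lean document; each statement's English description precedes it below -/
import Mathlib

section
/- For every natural number D there exists a constant C > 0 depending only on D with the following property: if p is a real polynomial of degree at most D with p(0) = 0, and T > 0 is such that |p(t)| ≤ 1 for all t ∈ [0, T], then for every t₁ with 0 ≤ t₁ ≤ T and every t ∈ [0, t₁] one has |p(t)| ≤ C · t₁ / T. -/
/-!
Rescaling `t = T x` reduces the claim to `T = 1`. On polynomials of degree at most `D`, a bound
on `[0, 1]` controls every coefficient, because such a polynomial is the Lagrange interpolant of
its values at the `D + 1` nodes `i / (D + 1)`. If moreover `q 0 = 0`, every monomial `x ^ k`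
occurring in `q` satisfies `|x ^ k| ≤ x` on `[0, 1]`, so `|q x|` is at most `x` times the sum of
the absolute values of the coefficients.
-/

open Polynomial Finset

theorem Lagrange.abs_coeff_le_sum_abs_eval_mul {F ι : Type*} [Field F] [LinearOrder F]
    [IsStrictOrderedRing F] [DecidableEq ι] {s : Finset ι} {v : ι → F} (hvs : Set.InjOn v s)
    {q : F[X]} (hq : q.degree < #s) (k : ℕ) :
    |q.coeff k| ≤ ∑ j ∈ s, |q.eval (v j)| * |(Lagrange.basis s v j).coeff k| := by
  conv_lhs => rw [Lagrange.eq_interpolate hvs hq, Lagrange.interpolate_apply, finsetSum_coeff]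
  refine (abs_sum_le_sum_abs _ _).trans_eq (sum_congr rfl fun j _ => ?_)
  rw [coeff_C_mul, abs_mul]

theorem Polynomial.abs_eval_le_mul_sum_abs_coeff {R : Type*} [CommRing R] [LinearOrder R]
    [IsStrictOrderedRing R] {q : R[X]} {n : ℕ} (hn : q.natDegree < n) (hq0 : q.coeff 0 = 0)
    {x : R} (hx0 : 0 ≤ x) (hx1 : x ≤ 1) :
    |q.eval x| ≤ x * ∑ k ∈ range n, |q.coeff k| := by
  rw [eval_eq_sum_range' hn, mul_sum]
  refine (abs_sum_le_sum_abs _ _).trans (sum_le_sum fun k _ => ?_)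
  rcases k.eq_zero_or_pos with rfl | hk
  · simp [hq0]
  · rw [abs_mul, abs_pow, abs_of_nonneg hx0, mul_comm x]
    exact mul_le_mul_of_nonneg_left (pow_le_of_le_one hx0 hx1 hk.ne') (abs_nonneg _)

theorem exists_sum_abs_coeff_le_of_abs_eval_le_one (D : ℕ) :
    ∃ M : ℝ, 0 ≤ M ∧ ∀ q : ℝ[X], q.natDegree ≤ D →
      (∀ x ∈ Set.Icc (0 : ℝ) 1, |q.eval x| ≤ 1) → ∑ k ∈ range (D + 1), |q.coeff k| ≤ M := by
  set s := range (D + 1)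
  set v : ℕ → ℝ := fun i => i / (D + 1)
  have hD : (0 : ℝ) < D + 1 := by positivity
  have hvs : Set.InjOn v s := fun i _ j _ h => by
    simpa [v, div_left_inj' hD.ne'] using h
  have hv : ∀ j ∈ s, v j ∈ Set.Icc (0 : ℝ) 1 := fun j hj => by
    refine ⟨by positivity, (div_le_one hD).2 ?_⟩
    exact_mod_cast (mem_range.1 hj).le
  refine ⟨∑ k ∈ s, ∑ j ∈ s, |(Lagrange.basis s v j).coeff k|, by positivity,
    fun q hq hbd => sum_le_sum fun k _ => ?_⟩
  have hdeg : q.degree < #s := by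
    rw [card_range]
    exact (degree_le_of_natDegree_le hq).trans_lt (WithBot.coe_lt_coe.2 D.lt_succ_self)
  exact (Lagrange.abs_coeff_le_sum_abs_eval_mul hvs hdeg k).trans
    (sum_le_sum fun j hj => mul_le_of_le_one_left (abs_nonneg _) (hbd _ (hv j hj)))

theorem exists_abs_eval_le_mul_of_abs_eval_le_one (D : ℕ) :
    ∃ C : ℝ, 0 < C ∧ ∀ q : ℝ[X], q.natDegree ≤ D → q.eval 0 = 0 →
      (∀ x ∈ Set.Icc (0 : ℝ) 1, |q.eval x| ≤ 1) → ∀ x ∈ Set.Icc (0 : ℝ) 1, |q.eval x| ≤ C * x := by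
  obtain ⟨M, hM, hcoeff⟩ := exists_sum_abs_coeff_le_of_abs_eval_le_one D
  refine ⟨M + 1, by positivity, fun q hq hq0 hbd x ⟨hx0, hx1⟩ => ?_⟩
  have hq0' : q.coeff 0 = 0 := by rwa [coeff_zero_eq_eval_zero]
  calc |q.eval x| ≤ x * ∑ k ∈ range (D + 1), |q.coeff k| :=
        abs_eval_le_mul_sum_abs_coeff (Nat.lt_succ_of_le hq) hq0' hx0 hx1
    _ ≤ x * (M + 1) := mul_le_mul_of_nonneg_left ((hcoeff q hq hbd).trans (by linarith)) hx0
    _ = (M + 1) * x := mul_comm _ _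

/-- Rescaling estimate for real polynomials vanishing at `0`: if `|p| ≤ 1` on `[0, T]`,
then for `0 ≤ t₁ ≤ T` one has `|p(t)| ≤ C · t₁ / T` for all `t ∈ [0, t₁]`,
with `C` depending only on the degree bound `D`. -/
theorem polynomial_rescaling_bound (D : ℕ) :
    ∃ C : ℝ, 0 < C ∧
      ∀ p : Polynomial ℝ, p.natDegree ≤ D → p.eval 0 = 0 →
        ∀ T : ℝ, 0 < T → (∀ t ∈ Set.Icc (0 : ℝ) T, |p.eval t| ≤ 1) →
          ∀ t₁ : ℝ, 0 ≤ t₁ → t₁ ≤ T →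
            ∀ t ∈ Set.Icc (0 : ℝ) t₁, |p.eval t| ≤ C * t₁ / T := by
  obtain ⟨C, hC, hunit⟩ := exists_abs_eval_le_mul_of_abs_eval_le_one D
  refine ⟨C, hC, fun p hp hp0 T hT hbd t₁ _ ht₁T t ⟨ht0, htt₁⟩ => ?_⟩
  set q := p.comp (Polynomial.C T * X)
  have hq : ∀ x, q.eval x = p.eval (T * x) := fun x => by simp [q]
  have hqdeg : q.natDegree ≤ D := by
    rwa [natDegree_comp, natDegree_C_mul_X T hT.ne', mul_one]
  have hqbd : ∀ x ∈ Set.Icc (0 : ℝ) 1, |q.eval x| ≤ 1 := fun x ⟨hx0, hx1⟩ =>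
    hq x ▸ hbd _ ⟨by positivity, mul_le_of_le_one_right hT.le hx1⟩
  have htT : t / T ∈ Set.Icc (0 : ℝ) 1 := ⟨by positivity, (div_le_one hT).2 (htt₁.trans ht₁T)⟩
  calc |p.eval t| = |q.eval (t / T)| := by rw [hq, mul_div_cancel₀ t hT.ne']
    _ ≤ C * (t / T) := hunit q hqdeg (by simp [hq, hp0]) hqbd _ htT
    _ ≤ C * t₁ / T := by rw [mul_div_assoc]; gcongr
end

section
/- Let E be a finite-dimensional real inner product space, G a group, and ρ : G → GL(E) a linear representation of G on E. Call a linear subspace V ⊆ E invariant if ρ(g)(V) ⊆ V for all g ∈ G. Assume that every invariant subspace of E admits an invariant complement (i.e. an invariant subspace W with V ⊕ W = E). Then there exists a constant κ > 0 such that for every invariant subspace V ⊆ E there exists an invariant complement W ⊆ E (so V ⊕ W = E) satisfying ‖v + w‖² ≥ κ (‖v‖² + ‖w‖²) for all v ∈ V and w ∈ W. -/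
/-!
Idempotents of norm at most `1` whose range is invariant form a compact set `K` of operators,
and `K` contains the orthogonal projection onto every invariant subspace. If `P ∈ K` projects
onto `V` and `W` is an invariant complement of `V`, then `W` stays a complement of the range of
every projection `P'` close to `P`: the distortion bound of `(V, W)` survives up to a factor `2`,
which makes the range of `P'` meet `W` trivially, and the rank of `P'` cannot be smaller than
that of `P`. Covering `K` by finitely many such neighbourhoods gives a uniform constant.
-/

open Filter Topology Module

theorem IsCompact.exists_forall_of_forall_exists_eventually {X ι : Type*} [TopologicalSpace X]
    [Preorder ι] [IsDirected ι (· ≤ ·)] [Nonempty ι] {K : Set X} {S : X → ι → Prop}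
    (hK : IsCompact K) (hS : ∀ x, Monotone (S x)) (h : ∀ x ∈ K, ∃ i, ∀ᶠ y in 𝓝[K] x, S y i) :
    ∃ i, ∀ y ∈ K, S y i := by
  refine hK.induction_on (p := fun s => ∃ i, ∀ y ∈ s, S y i) ⟨Classical.arbitrary ι, by simp⟩
    (fun s t hst ⟨i, hi⟩ => ⟨i, fun y hy => hi y (hst hy)⟩) ?_
    fun x hx => (h x hx).elim fun i hi => ⟨_, hi, i, fun _ hy => hy⟩
  rintro s t ⟨i, hi⟩ ⟨j, hj⟩
  obtain ⟨k, hik, hjk⟩ := directed_of (· ≤ ·) i j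
  exact ⟨k, fun y hy => hy.elim (fun hy => hS y hik (hi y hy)) fun hy => hS y hjk (hj y hy)⟩

namespace Submodule

variable {E : Type*} [NormedAddCommGroup E] [NormedSpace ℝ E]

def DistortionLE (C : ℝ) (V W : Submodule ℝ E) : Prop :=
  ∀ v ∈ V, ∀ w ∈ W, ‖v‖ + ‖w‖ ≤ C * ‖v + w‖

variable {C C' : ℝ} {V V' W : Submodule ℝ E}

theorem DistortionLE.mono (h : DistortionLE C V W) (hC : C ≤ C') : DistortionLE C' V W :=
  fun v hv w hw => (h v hv w hw).trans (mul_le_mul_of_nonneg_right hC (norm_nonneg _))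

theorem DistortionLE.disjoint (h : DistortionLE C V W) : Disjoint V W := by
  refine disjoint_def.mpr fun v hvV hvW => norm_le_zero_iff.mp ?_
  have := h v hvV (-v) (neg_mem hvW)
  rw [add_neg_cancel, norm_zero, mul_zero, norm_neg] at this
  linarith

theorem DistortionLE.inv_sq_mul_le (h : DistortionLE C V W) (hC : 0 < C) :
    ∀ v ∈ V, ∀ w ∈ W, C⁻¹ ^ 2 * (‖v‖ ^ 2 + ‖w‖ ^ 2) ≤ ‖v + w‖ ^ 2 := by
  intro v hv w hw
  have hsq : ‖v‖ ^ 2 + ‖w‖ ^ 2 ≤ (C * ‖v + w‖) ^ 2 := by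
    nlinarith [h v hv w hw, norm_nonneg v, norm_nonneg w]
  calc C⁻¹ ^ 2 * (‖v‖ ^ 2 + ‖w‖ ^ 2) ≤ C⁻¹ ^ 2 * (C * ‖v + w‖) ^ 2 := by gcongr
    _ = ‖v + w‖ ^ 2 := by field_simp

theorem exists_distortionLE_of_isCompl [FiniteDimensional ℝ E] (h : IsCompl V W) :
    ∃ C, 0 < C ∧ DistortionLE C V W := by
  set π := LinearMap.toContinuousLinearMap (V.projection W h)
  refine ⟨2 * ‖π‖ + 1, by positivity, fun v hv w hw => ?_⟩
  have hπ : π (v + w) = v := by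
    simp [π, projection_apply_of_mem_left h hv, projection_apply_of_mem_right h hw]
  have hv' : ‖v‖ ≤ ‖π‖ * ‖v + w‖ := by simpa [hπ] using π.le_opNorm (v + w)
  have hw' : ‖w‖ ≤ ‖v + w‖ + ‖v‖ := by simpa using norm_sub_le (v + w) v
  linarith

theorem DistortionLE.of_norm_sub_le {P P' : E →L[ℝ] E} (h : DistortionLE C V W) (hC : 0 ≤ C)
    (hP : ∀ x, P x ∈ V) (hP' : ∀ x ∈ V', P' x = x) (hPP' : 2 * (C + 1) * ‖P' - P‖ ≤ 1) :
    DistortionLE (2 * C) V' W := by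
  intro v hv w hw
  set ε := ‖P' - P‖
  have hclose : ‖v - P v‖ ≤ ε * ‖v‖ := by
    simpa [hP' v hv] using (P' - P).le_opNorm v
  have hv' : ‖v‖ ≤ ‖P v‖ + ε * ‖v‖ := by
    linarith [norm_le_norm_add_norm_sub' v (P v)]
  have hvw : C * ‖P v + w‖ ≤ C * (‖v + w‖ + ε * ‖v‖) := by
    gcongr
    calc ‖P v + w‖ = ‖(v + w) - (v - P v)‖ := by abel_nf
      _ ≤ ‖v + w‖ + ‖v - P v‖ := norm_sub_le _ _
      _ ≤ ‖v + w‖ + ε * ‖v‖ := by gcongr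
  have hsmall : (C + 1) * ε * ‖v‖ ≤ ‖v‖ / 2 := by nlinarith [norm_nonneg v]
  nlinarith [h (P v) (hP v) w hw, norm_nonneg w]

theorem finrank_le_finrank_of_norm_sub_lt_one [FiniteDimensional ℝ E] {P P' : E →L[ℝ] E}
    (hP : ∀ x ∈ V, P x = x) (hP' : ∀ x, P' x ∈ V') (hPP' : ‖P' - P‖ < 1) :
    finrank ℝ V ≤ finrank ℝ V' := by
  refine LinearMap.finrank_le_finrank_of_injective
    (f := (P' : E →ₗ[ℝ] E).restrict fun x _ => hP' x) ((injective_iff_map_eq_zero _).mpr ?_)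
  rintro ⟨v, hv⟩ hv0
  have hP'v : P' v = 0 := congrArg Subtype.val hv0
  have : ‖v‖ ≤ ‖P' - P‖ * ‖v‖ := by
    simpa [hP'v, hP v hv] using (P' - P).le_opNorm v
  have : ‖v‖ = 0 := by nlinarith [norm_nonneg v]
  simpa using this

theorem exists_eventually_isCompl_distortionLE [FiniteDimensional ℝ E] {P : E →L[ℝ] E}
    (hP : LinearMap.IsProj V P) (hVW : IsCompl V W) :
    ∃ C, ∀ᶠ P' in 𝓝 P, ∀ V' : Submodule ℝ E, LinearMap.IsProj V' P' →
      IsCompl V' W ∧ DistortionLE C V' W := by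
  obtain ⟨C, hC, hCVW⟩ := exists_distortionLE_of_isCompl hVW
  refine ⟨2 * C, ?_⟩
  filter_upwards [Metric.closedBall_mem_nhds P (by positivity : (0 : ℝ) < 1 / (2 * (C + 1)))]
    with P' hP' V' hV'
  rw [Metric.mem_closedBall, dist_eq_norm, le_div_iff₀' (by positivity)] at hP'
  have hdist := hCVW.of_norm_sub_le hC.le hP.map_mem hV'.map_id (by linarith)
  refine ⟨(isCompl_iff_disjoint _ _ ?_).mpr hdist.disjoint, hdist⟩
  have hrank := finrank_le_finrank_of_norm_sub_lt_one hP.map_id hV'.map_mem (by nlinarith)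
  have := finrank_add_eq_of_isCompl hVW
  omega

end Submodule

section Invariant

variable {E ι : Type*} [NormedAddCommGroup E] [NormedSpace ℝ E] [FiniteDimensional ℝ E]

-- The condition says that the range of `P` is invariant under every `T i`, written pointwise so
-- that the set is visibly closed.
def invariantProjections (T : ι → E →ₗ[ℝ] E) : Set (E →L[ℝ] E) :=
  {P | IsIdempotentElem P ∧ ∀ i x, P (T i (P x)) = T i (P x)}

theorem isClosed_invariantProjections (T : ι → E →ₗ[ℝ] E) :
    IsClosed (invariantProjections T) := by
  have hT : ∀ i, Continuous (T i) := fun i => (T i).continuous_of_finiteDimensional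
  refine (isClosed_eq (by fun_prop) (by fun_prop)).inter ?_
  show IsClosed {P : E →L[ℝ] E | ∀ i x, P (T i (P x)) = T i (P x)}
  simp_rw [Set.ofPred_forall]
  exact isClosed_iInter fun i => isClosed_iInter fun x => isClosed_eq (by fun_prop) (by fun_prop)

theorem exists_eventually_invariant_isCompl_distortionLE {T : ι → E →ₗ[ℝ] E}
    (hcompl : ∀ V : Submodule ℝ E, (∀ i, ∀ v ∈ V, T i v ∈ V) →
      ∃ W : Submodule ℝ E, (∀ i, ∀ w ∈ W, T i w ∈ W) ∧ IsCompl V W)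
    {P : E →L[ℝ] E} (hP : P ∈ invariantProjections T) :
    ∃ C, ∀ᶠ P' in 𝓝 P, ∀ V' : Submodule ℝ E, LinearMap.IsProj V' P' →
      ∃ W : Submodule ℝ E, (∀ i, ∀ w ∈ W, T i w ∈ W) ∧ IsCompl V' W ∧
        Submodule.DistortionLE C V' W := by
  obtain ⟨hidem, hinv⟩ := hP
  have hproj : LinearMap.IsProj (LinearMap.range (P : E →ₗ[ℝ] E)) P :=
    ⟨fun x => ⟨x, rfl⟩, by rintro _ ⟨x, rfl⟩; exact DFunLike.congr_fun hidem x⟩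
  obtain ⟨W, hW, hVW⟩ := hcompl (LinearMap.range (P : E →ₗ[ℝ] E)) <| by
    rintro i _ ⟨x, rfl⟩
    exact ⟨_, hinv i x⟩
  obtain ⟨C, hC⟩ := Submodule.exists_eventually_isCompl_distortionLE hproj hVW
  exact ⟨C, hC.mono fun P' hP' V' hV' => ⟨W, hW, hP' V' hV'⟩⟩

end Invariant

/-- Existence of undistorted invariant complements: if every invariant subspace of a
finite-dimensional real inner product space `E` (under a representation `ρ` of a group `G`)
admits an invariant complement, then there is `κ > 0` such that every invariant subspace
admits an invariant complement `W` with `‖v + w‖² ≥ κ (‖v‖² + ‖w‖²)` for `v ∈ V`, `w ∈ W`. -/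
theorem exists_undistorted_invariant_complement
    {E : Type*} [NormedAddCommGroup E] [InnerProductSpace ℝ E] [FiniteDimensional ℝ E]
    {G : Type*} [Group G] (ρ : G →* (E ≃ₗ[ℝ] E))
    (hcompl : ∀ V : Submodule ℝ E, (∀ g : G, ∀ v ∈ V, ρ g v ∈ V) →
      ∃ W : Submodule ℝ E, (∀ g : G, ∀ w ∈ W, ρ g w ∈ W) ∧ IsCompl V W) :
    ∃ κ : ℝ, 0 < κ ∧
      ∀ V : Submodule ℝ E, (∀ g : G, ∀ v ∈ V, ρ g v ∈ V) →
        ∃ W : Submodule ℝ E, (∀ g : G, ∀ w ∈ W, ρ g w ∈ W) ∧ IsCompl V W ∧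
          ∀ v ∈ V, ∀ w ∈ W, κ * (‖v‖ ^ 2 + ‖w‖ ^ 2) ≤ ‖v + w‖ ^ 2 := by
  set T : G → E →ₗ[ℝ] E := fun g => ρ g
  have hK : IsCompact (invariantProjections T ∩ Metric.closedBall 0 1) :=
    (isCompact_closedBall 0 1).inter_left (isClosed_invariantProjections T)
  obtain ⟨C, hC⟩ := hK.exists_forall_of_forall_exists_eventually
    (S := fun P C => ∀ V : Submodule ℝ E, LinearMap.IsProj V P →
      ∃ W : Submodule ℝ E, (∀ g, ∀ w ∈ W, T g w ∈ W) ∧ IsCompl V W ∧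
        Submodule.DistortionLE C V W)
    (fun P C C' hCC' h V hV => (h V hV).imp fun W ⟨hW, hVW, hd⟩ => ⟨hW, hVW, hd.mono hCC'⟩)
    fun P hP => (exists_eventually_invariant_isCompl_distortionLE hcompl hP.1).imp
      fun C hC => hC.filter_mono nhdsWithin_le_nhds
  refine ⟨(max C 1)⁻¹ ^ 2, by positivity, fun V hV => ?_⟩
  have hPV : V.starProjection ∈ invariantProjections T ∩ Metric.closedBall 0 1 :=
    ⟨⟨V.isIdempotentElem_starProjection, fun g x => V.starProjection_eq_self_iff.mpr
      (hV g _ (V.starProjection_apply_mem x))⟩, by simpa using V.starProjection_norm_le⟩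
  obtain ⟨W, hW, hVW, hd⟩ := hC _ hPV V
    ⟨V.starProjection_apply_mem, fun x hx => V.starProjection_eq_self_iff.mpr hx⟩
  exact ⟨W, hW, hVW, (hd.mono (le_max_left C 1)).inv_sq_mul_le (by positivity)⟩
end

section
/- Let V be a finite-dimensional vector space over ℚ with dim V ≥ 3, and let Q : V → ℚ be a quadratic form whose polar bilinear form B(v, w) = Q(v + w) − Q(v) − Q(w) is nondegenerate. Suppose W ⊆ V is a linear subspace such that f(W) ⊆ W for every linear automorphism f of V satisfying det f = 1 and Q(f v) = Q(v) for all v ∈ V. Then W = {0} or W = V. -/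
/-!
Products of two reflections in anisotropic vectors are determinant-one isometries. Given `x ∈ W`,
dimension at least `3` provides an anisotropic `v` orthogonal to `x` (otherwise `x^⊥` would be a
totally isotropic subspace of more than half the dimension), so `τ_u (τ_v x) = τ_u x = x - c u`
lies in `W`, with `c ≠ 0` as soon as `B(x, u) ≠ 0`. Thus `W` contains every anisotropic `u` with
`B(x, u) ≠ 0`, and over an infinite field every vector is a difference `(v + t u) - t u` of two
such vectors.
-/

open Module QuadraticMap

theorem Polynomial.exists_eval_ne_zero_and_eval_ne_zero {R : Type*} [CommRing R] [IsDomain R]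
    [Infinite R] {p q : Polynomial R} (hp : p ≠ 0) (hq : q ≠ 0) :
    ∃ t, p.eval t ≠ 0 ∧ q.eval t ≠ 0 := by
  by_contra! h
  refine mul_ne_zero hp hq (Polynomial.zero_of_eval_zero _ fun t => ?_)
  by_cases ht : p.eval t = 0
  · simp [ht]
  · simp [h t ht]

namespace QuadraticMap

variable {K V : Type*} [Field K] [AddCommGroup V] [Module K V] (Q : QuadraticForm K V)

theorem inv_smul_polarBilin_self {u : V} (hu : Q u ≠ 0) :
    ((Q u)⁻¹ • polarBilin Q u) u = 2 := by
  rw [LinearMap.smul_apply, polarBilin_apply_apply, polar_self, smul_eq_mul, two_nsmul,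
    ← two_mul, mul_left_comm, inv_mul_cancel₀ hu, mul_one]

noncomputable def reflection {u : V} (hu : Q u ≠ 0) : V ≃ₗ[K] V :=
  Module.reflection (Q.inv_smul_polarBilin_self hu)

variable {Q}

theorem reflection_apply {u : V} (hu : Q u ≠ 0) (x : V) :
    Q.reflection hu x = x - ((Q u)⁻¹ * polar Q u x) • u := by
  simp [reflection, Module.reflection_apply]

theorem reflection_apply_of_polar_eq_zero {u x : V} (hu : Q u ≠ 0) (hx : polar Q u x = 0) :
    Q.reflection hu x = x := by
  simp [reflection_apply, hx]

theorem map_reflection {u : V} (hu : Q u ≠ 0) (x : V) : Q (Q.reflection hu x) = Q x := by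
  rw [reflection_apply, sub_eq_add_neg, ← neg_smul, QuadraticMap.map_add Q, QuadraticMap.map_smul,
    polar_smul_right, polar_comm]
  simp only [smul_eq_mul]
  field_simp
  ring

theorem det_reflection [FiniteDimensional K V] {u : V} (hu : Q u ≠ 0) :
    LinearMap.det (Q.reflection hu : V →ₗ[K] V) = -1 := by
  have : (Q.reflection hu : V →ₗ[K] V) =
      LinearMap.transvection (-((Q u)⁻¹ • polarBilin Q u)) u := by
    ext x
    simp [reflection, Module.reflection_apply, LinearMap.transvection.apply, sub_eq_add_neg]
  rw [this, LinearMap.transvection.det, LinearMap.neg_apply, inv_smul_polarBilin_self Q hu]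
  norm_num

theorem exists_ne_zero_of_separatingLeft [Nontrivial V] (hQ : (polarBilin Q).SeparatingLeft) :
    ∃ z, Q z ≠ 0 := by
  by_contra! h
  obtain ⟨v, hv⟩ := exists_ne (0 : V)
  exact hv (hQ v fun w => by simp [polarBilin_apply_apply, polar, h])

theorem two_mul_finrank_le_of_forall_mem_eq_zero [FiniteDimensional K V]
    (hQ : (polarBilin Q).SeparatingLeft) {L : Submodule K V} (hL : ∀ v ∈ L, Q v = 0) :
    2 * finrank K L ≤ finrank K V := by
  have hrefl : (polarBilin Q).IsRefl := fun x y h => by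
    rwa [polarBilin_apply_apply, polar_comm, ← polarBilin_apply_apply]
  have hL_le : L ≤ LinearMap.BilinForm.orthogonal (polarBilin Q) L := fun v hv =>
    LinearMap.BilinForm.mem_orthogonal_iff.2 fun w hw => by
      simp [polarBilin_apply_apply, polar, hL _ hv, hL _ hw, hL _ (L.add_mem hw hv)]
  have := Submodule.finrank_mono hL_le
  rw [LinearMap.BilinForm.finrank_orthogonal (hrefl.nondegenerate_iff_separatingLeft.2 hQ)] at this
  have := L.finrank_le
  omega

theorem exists_polar_eq_zero_and_ne_zero [FiniteDimensional K V]
    (hQ : (polarBilin Q).SeparatingLeft) (hdim : 3 ≤ finrank K V) (x : V) :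
    ∃ v, polar Q x v = 0 ∧ Q v ≠ 0 := by
  by_contra! h
  have hker := two_mul_finrank_le_of_forall_mem_eq_zero hQ (L := LinearMap.ker (polarBilin Q x))
    fun v hv => h v hv
  have hrank := LinearMap.finrank_range_add_finrank_ker (polarBilin Q x)
  have hrange := (Submodule.finrank_le (LinearMap.range (polarBilin Q x))).trans_eq
    (finrank_self K)
  omega

open Polynomial in
theorem exists_map_add_smul_ne_zero_and_polar_ne_zero [Infinite K] {x v u : V}
    (hvu : Q v ≠ 0 ∨ Q u ≠ 0) (hxu : polar Q x u ≠ 0) :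
    ∃ t : K, Q (v + t • u) ≠ 0 ∧ polar Q x (v + t • u) ≠ 0 := by
  set p : K[X] := C (Q v) + C (polar Q v u) * X + C (Q u) * X ^ 2
  set q : K[X] := C (polar Q x v) + C (polar Q x u) * X
  have hp : p ≠ 0 := fun h => by
    rcases hvu with h' | h'
    · exact h' (by simpa [p] using congrArg (coeff · 0) h)
    · exact h' (by simpa [p] using congrArg (coeff · 2) h)
  have hq : q ≠ 0 := fun h => hxu (by simpa [q] using congrArg (coeff · 1) h)
  obtain ⟨t, hpt, hqt⟩ := Polynomial.exists_eval_ne_zero_and_eval_ne_zero hp hq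
  refine ⟨t, ?_, ?_⟩
  · convert hpt using 1
    simp [p, QuadraticMap.map_add Q, QuadraticMap.map_smul, polar_smul_right]
    ring
  · convert hqt using 1
    simp [q, polar_add_right, polar_smul_right]
    ring

def IsSOInvariant (Q : QuadraticForm K V) (W : Submodule K V) : Prop :=
  ∀ f : V ≃ₗ[K] V, LinearMap.det (f : V →ₗ[K] V) = 1 → (∀ v, Q (f v) = Q v) →
    ∀ w ∈ W, f w ∈ W

theorem IsSOInvariant.reflection_reflection_mem [FiniteDimensional K V] {W : Submodule K V}
    (hW : Q.IsSOInvariant W) {u v w : V} (hu : Q u ≠ 0) (hv : Q v ≠ 0) (hw : w ∈ W) :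
    Q.reflection hu (Q.reflection hv w) ∈ W :=
  hW ((Q.reflection hv).trans (Q.reflection hu))
    (by rw [LinearEquiv.coe_trans, LinearMap.det_comp, det_reflection, det_reflection]; norm_num)
    (fun x => by simp [map_reflection]) w hw

theorem IsSOInvariant.mem_of_polar_ne_zero [FiniteDimensional K V] {W : Submodule K V}
    (hW : Q.IsSOInvariant W) (hQ : (polarBilin Q).SeparatingLeft) (hdim : 3 ≤ finrank K V)
    {x u : V} (hx : x ∈ W) (hu : Q u ≠ 0) (hxu : polar Q x u ≠ 0) : u ∈ W := by
  obtain ⟨v, hxv, hv⟩ := exists_polar_eq_zero_and_ne_zero hQ hdim x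
  have hrot := hW.reflection_reflection_mem hu hv hx
  rw [reflection_apply_of_polar_eq_zero hv (by rwa [polar_comm]), reflection_apply] at hrot
  have hc : (Q u)⁻¹ * polar Q u x ≠ 0 := mul_ne_zero (inv_ne_zero hu) (by rwa [polar_comm])
  have := W.sub_mem hx hrot
  rwa [sub_sub_cancel, W.smul_mem_iff hc] at this

end QuadraticMap

/-- Irreducibility of the standard representation of the special orthogonal group of a
nondegenerate rational quadratic form in dimension at least `3`: a subspace invariant
under all determinant-one isometries of `Q` is trivial. -/
theorem standard_rep_irreducible {V : Type*} [AddCommGroup V] [Module ℚ V]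
    [FiniteDimensional ℚ V] (hdim : 3 ≤ Module.finrank ℚ V)
    (Q : QuadraticForm ℚ V)
    (hnd : ∀ v : V, (∀ w : V, Q (v + w) - Q v - Q w = 0) → v = 0)
    (W : Submodule ℚ V)
    (hW : ∀ f : V ≃ₗ[ℚ] V, LinearMap.det (f : V →ₗ[ℚ] V) = 1 →
      (∀ v : V, Q (f v) = Q v) → ∀ w ∈ W, f w ∈ W) :
    W = ⊥ ∨ W = ⊤ := by
  have hQ : (polarBilin Q).SeparatingLeft := hnd
  have : Nontrivial V := Module.nontrivial_of_finrank_pos (R := ℚ) (by omega)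
  refine or_iff_not_imp_left.2 fun hbot => ?_
  obtain ⟨x, hxW, hx⟩ := W.exists_mem_ne_zero_of_ne_bot hbot
  have hmem {u : V} : Q u ≠ 0 → polar Q x u ≠ 0 → u ∈ W :=
    IsSOInvariant.mem_of_polar_ne_zero hW hQ hdim hxW
  obtain ⟨y, hy⟩ : ∃ y, polar Q x y ≠ 0 := by
    by_contra! h
    exact hx (hQ x h)
  obtain ⟨z, hz⟩ := exists_ne_zero_of_separatingLeft hQ
  obtain ⟨t, hQu, hxu⟩ := exists_map_add_smul_ne_zero_and_polar_ne_zero (Or.inl hz) hy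
  refine Submodule.eq_top_iff'.2 fun v => ?_
  obtain ⟨s, hQv, hxv⟩ := exists_map_add_smul_ne_zero_and_polar_ne_zero (Or.inr hQu) hxu
  simpa using W.sub_mem (hmem hQv hxv) (W.smul_mem s (hmem hQu hxu))
end

section
/- Let V be a finite-dimensional vector space over ℚ with dim V ≥ 3, and let Q : V → ℚ be a quadratic form whose polar bilinear form B(v, w) = Q(v + w) − Q(v) − Q(w) is nondegenerate. Suppose T : V → V is a ℚ-linear map that commutes with every linear automorphism f of V satisfying det f = 1 and Q(f v) = Q(v) for all v ∈ V (i.e. T ∘ f = f ∘ T for all such f). Then T is a scalar multiple of the identity map of V. -/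
/-!
Pick a basis `e` of `V` that is orthogonal for the polar form; nondegeneracy makes every `e i`
anisotropic. For orthogonal anisotropic `v, w`, the product of the reflections in `v` and `w` is a
determinant-one isometry acting as `-1` on `span {v, w}` and as `1` on its orthogonal complement, so
a `T` commuting with it sends `v` into `span {v, w}`. With three basis vectors available,
`T (e i) ∈ span {e i, e j} ∩ span {e i, e k} = span {e i}`. Finally the eigenvalues of `e i` and
`e j` agree, by the same argument applied to an anisotropic `e i + t • e j` and a third `e k`.
-/

open Module QuadraticMap Submodule

theorem LinearMap.det_id_sub_smulRight {K V : Type*} [Field K] [AddCommGroup V] [Module K V]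
    [FiniteDimensional K V] (f : Dual K V) (x : V) :
    LinearMap.det (LinearMap.id - f.smulRight x) = 1 - f x := by
  let b := finBasis K V
  have hmat : LinearMap.toMatrix b b (f.smulRight x) = Matrix.vecMulVec (b.repr x) (f ∘ b) := by
    ext i j
    simp [LinearMap.toMatrix_apply, Matrix.vecMulVec_apply, mul_comm]
  rw [← LinearMap.det_toMatrix b, map_sub, LinearMap.toMatrix_id, hmat, Matrix.vecMulVec_eq Unit,
    Matrix.det_one_sub_mul_comm, Matrix.det_unique]
  simp only [Matrix.one_apply_eq, Matrix.sub_apply, Matrix.replicateRow_mul_replicateCol_apply]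
  conv_rhs => rw [← b.sum_repr x]
  simp only [dotProduct, Function.comp_apply, map_sum, map_smul, smul_eq_mul, mul_comm]

theorem Module.Basis.mem_span_singleton_of_mem_span_pair {R M ι : Type*} [Semiring R]
    [AddCommMonoid M] [Module R M] (e : Basis ι R M) {i j k : ι} (hjk : j ≠ k) {x : M}
    (hj : x ∈ span R {e i, e j}) (hk : x ∈ span R {e i, e k}) : x ∈ R ∙ e i := by
  rw [← Set.image_pair, e.mem_span_image] at hj hk
  rw [← Set.image_singleton, e.mem_span_image]
  intro l hl
  have hlj := hj hl
  have hlk := hk hl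
  simp only [Set.mem_insert_iff, Set.mem_singleton_iff] at hlj hlk ⊢
  grind

theorem Fintype.exists_ne_ne_of_two_lt_card {ι : Type*} [Fintype ι] (h : 2 < Fintype.card ι)
    (i j : ι) : ∃ k, k ≠ i ∧ k ≠ j := by
  classical
  obtain ⟨k, -, hk⟩ :=
    Finset.exists_mem_notMem_of_card_lt_card (s := {i, j}) (t := Finset.univ)
      (Finset.card_le_two.trans_lt h)
  simp only [Finset.mem_insert, Finset.mem_singleton, not_or] at hk
  exact ⟨k, hk⟩

namespace QuadraticForm

variable {K V : Type*} [Field K] [AddCommGroup V] [Module K V] {Q : QuadraticForm K V}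

variable (Q) in
theorem map_add_smul (x y : V) (a : K) :
    Q (x + a • y) = Q x + a * polar Q x y + a * a * Q y := by
  rw [QuadraticMap.map_add Q, polar_smul_right, QuadraticMap.map_smul, smul_eq_mul, smul_eq_mul]
  ring

theorem inv_mul_polar_self {v : V} (hv : Q v ≠ 0) : (Q v)⁻¹ * polar Q v v = 2 := by
  rw [polar_self, nsmul_eq_mul, Nat.cast_ofNat, mul_left_comm, inv_mul_cancel₀ hv, mul_one]

variable (Q) in
def reflection (v : V) (hv : Q v ≠ 0) : V ≃ₗ[K] V :=
  Module.reflection (x := v) (f := (Q v)⁻¹ • polarBilin Q v) <| by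
    rw [LinearMap.smul_apply, polarBilin_apply_apply, smul_eq_mul, inv_mul_polar_self hv]

theorem reflection_apply {v : V} (hv : Q v ≠ 0) (x : V) :
    Q.reflection v hv x = x - ((Q v)⁻¹ * polar Q v x) • v := by
  simp [reflection, Module.reflection_apply]

@[simp]
theorem reflection_apply_self {v : V} (hv : Q v ≠ 0) : Q.reflection v hv v = -v :=
  Module.reflection_apply_self _

theorem reflection_apply_of_polar_eq_zero {v x : V} (hv : Q v ≠ 0) (hx : polar Q v x = 0) :
    Q.reflection v hv x = x := by
  simp [reflection_apply, hx]

theorem sub_reflection_mem_span {v : V} (hv : Q v ≠ 0) (x : V) :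
    x - Q.reflection v hv x ∈ K ∙ v := by
  rw [reflection_apply, sub_sub_cancel]
  exact smul_mem _ _ (mem_span_singleton_self v)

@[simp]
theorem map_reflection {v : V} (hv : Q v ≠ 0) (x : V) : Q (Q.reflection v hv x) = Q x := by
  rw [reflection_apply, sub_eq_add_neg, ← neg_smul, map_add_smul, polar_comm]
  field_simp
  ring

theorem det_reflection [FiniteDimensional K V] {v : V} (hv : Q v ≠ 0) :
    LinearMap.det (Q.reflection v hv : V →ₗ[K] V) = -1 := by
  have : (Q.reflection v hv : V →ₗ[K] V) =
      LinearMap.id - ((Q v)⁻¹ • polarBilin Q v).smulRight v :=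
    rfl
  rw [this, LinearMap.det_id_sub_smulRight, LinearMap.smul_apply, polarBilin_apply_apply,
    smul_eq_mul, inv_mul_polar_self hv]
  norm_num

variable (Q) in
def CommutesWithSpecialIsometries (T : V →ₗ[K] V) : Prop :=
  ∀ f : V ≃ₗ[K] V, LinearMap.det (f : V →ₗ[K] V) = 1 →
    (∀ v : V, Q (f v) = Q v) → ∀ v : V, T (f v) = f (T v)

theorem CommutesWithSpecialIsometries.mem_span_pair [FiniteDimensional K V] [NeZero (2 : K)]
    {T : V →ₗ[K] V} (hT : CommutesWithSpecialIsometries Q T) {v w : V} (hv : Q v ≠ 0)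
    (hw : Q w ≠ 0) (hvw : polar Q v w = 0) : T v ∈ span K {v, w} := by
  set f := (Q.reflection w hw).trans (Q.reflection v hv)
  have hdet : LinearMap.det (f : V →ₗ[K] V) = 1 := by
    rw [LinearEquiv.coe_trans, LinearMap.det_comp, det_reflection, det_reflection]
    norm_num
  have hfv : f v = -v := by
    simp [f, reflection_apply_of_polar_eq_zero hw ((polar_comm _ _ _).trans hvw)]
  have hsub : ∀ x, x - f x ∈ span K {v, w} := fun x => by
    rw [← sub_add_sub_cancel x (Q.reflection w hw x)]
    exact add_mem
      (span_mono (by simp) (sub_reflection_mem_span hw x))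
      (span_mono (by simp) (sub_reflection_mem_span hv _))
  have hTv : T v - f (T v) = (2 : K) • T v := by
    rw [← hT f hdet (by simp [f]) v, hfv, map_neg, two_smul, sub_neg_eq_add]
  simpa [hTv, smul_mem_iff _ (two_ne_zero (α := K))] using hsub (T v)

variable [CharZero K]

theorem exists_ne_zero_map_add_smul_ne_zero {x y : V} (hxy : polar Q x y = 0) (hy : Q y ≠ 0) :
    ∃ t : K, t ≠ 0 ∧ Q (x + t • y) ≠ 0 := by
  by_contra! h
  have h₁ := h 1 one_ne_zero
  have h₂ := h 2 two_ne_zero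
  rw [map_add_smul, hxy] at h₁ h₂
  exact hy (by linear_combination (h₂ - h₁) / 3)

theorem exists_orthogonal_basis_of_separatingLeft [FiniteDimensional K V]
    (hQ : (polarBilin Q).SeparatingLeft) :
    ∃ e : Basis (Fin (finrank K V)) K V,
      (∀ i j, i ≠ j → polar Q (e i) (e j) = 0) ∧ ∀ i, Q (e i) ≠ 0 := by
  have : Invertible (2 : K) := invertibleOfNonzero two_ne_zero
  obtain ⟨e, he⟩ := LinearMap.BilinForm.exists_orthogonal_basis (B := polarBilin Q)
    ⟨fun x y => polar_comm Q x y⟩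
  refine ⟨e, fun i j hij => he hij, fun i hi => ?_⟩
  apply he.not_isOrtho_basis_self_of_separatingLeft hQ i
  simp [hi]

section OrthogonalBasis

variable [FiniteDimensional K V] {ι : Type*} {T : V →ₗ[K] V} (e : Basis ι K V)

theorem CommutesWithSpecialIsometries.exists_apply_basis_eq_smul
    (hT : CommutesWithSpecialIsometries Q T) (he : ∀ i j, i ≠ j → polar Q (e i) (e j) = 0)
    (hQe : ∀ i, Q (e i) ≠ 0) {i j k : ι} (hij : i ≠ j) (hik : i ≠ k) (hjk : j ≠ k) :
    ∃ c : K, T (e i) = c • e i :=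
  (mem_span_singleton.1 <| e.mem_span_singleton_of_mem_span_pair hjk
    (hT.mem_span_pair (hQe i) (hQe j) (he i j hij))
    (hT.mem_span_pair (hQe i) (hQe k) (he i k hik))).imp fun _ h => h.symm

theorem CommutesWithSpecialIsometries.eq_of_apply_basis_eq_smul
    (hT : CommutesWithSpecialIsometries Q T) (he : ∀ i j, i ≠ j → polar Q (e i) (e j) = 0)
    (hQe : ∀ i, Q (e i) ≠ 0) {i j k : ι} (hij : i ≠ j) (hik : i ≠ k) (hjk : j ≠ k) {a b : K}
    (ha : T (e i) = a • e i) (hb : T (e j) = b • e j) : a = b := by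
  obtain ⟨t, ht, hu⟩ := exists_ne_zero_map_add_smul_ne_zero (he i j hij) (hQe j)
  have huk : polar Q (e i + t • e j) (e k) = 0 := by
    rw [polar_add_left, polar_smul_left, he i k hik, he j k hjk, smul_zero, add_zero]
  obtain ⟨α, β, hαβ⟩ := Submodule.mem_span_pair.1 (hT.mem_span_pair hu (hQe k) huk)
  rw [map_add, map_smul, ha, hb] at hαβ
  have hi : α = a := by simpa [hij, hik] using congrArg (fun x => e.repr x i) hαβ
  have hj : α * t = t * b := by
    simpa [hij.symm, hjk] using congrArg (fun x => e.repr x j) hαβ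
  exact mul_left_cancel₀ ht (by rw [mul_comm, ← hi, hj])

end OrthogonalBasis

end QuadraticForm

/-- Schur-type commutant statement: a linear map commuting with every determinant-one
isometry of a nondegenerate rational quadratic form in dimension at least `3` is a
scalar multiple of the identity. -/
theorem commutant_of_special_orthogonal_is_scalar {V : Type*} [AddCommGroup V]
    [Module ℚ V] [FiniteDimensional ℚ V] (hdim : 3 ≤ Module.finrank ℚ V)
    (Q : QuadraticForm ℚ V)
    (hnd : ∀ v : V, (∀ w : V, Q (v + w) - Q v - Q w = 0) → v = 0)
    (T : V →ₗ[ℚ] V)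
    (hT : ∀ f : V ≃ₗ[ℚ] V, LinearMap.det (f : V →ₗ[ℚ] V) = 1 →
      (∀ v : V, Q (f v) = Q v) → ∀ v : V, T (f v) = f (T v)) :
    ∃ c : ℚ, ∀ v : V, T v = c • v := by
  have hT : QuadraticForm.CommutesWithSpecialIsometries Q T := hT
  obtain ⟨e, he, hQe⟩ := QuadraticForm.exists_orthogonal_basis_of_separatingLeft hnd
  have hcard : 2 < Fintype.card (Fin (finrank ℚ V)) := by rw [Fintype.card_fin]; omega
  have heigen : ∀ i, ∃ c : ℚ, T (e i) = c • e i := fun i => by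
    obtain ⟨j, hji, -⟩ := Fintype.exists_ne_ne_of_two_lt_card hcard i i
    obtain ⟨k, hki, hkj⟩ := Fintype.exists_ne_ne_of_two_lt_card hcard i j
    exact hT.exists_apply_basis_eq_smul e he hQe hji.symm hki.symm hkj.symm
  choose c hc using heigen
  let i₀ : Fin (finrank ℚ V) := ⟨0, by omega⟩
  have hscalar : T = c i₀ • LinearMap.id := e.ext fun i => by
    obtain rfl | hi := eq_or_ne i i₀
    · simp [hc]
    obtain ⟨k, hki, hki₀⟩ := Fintype.exists_ne_ne_of_two_lt_card hcard i i₀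
    rw [hc, hT.eq_of_apply_basis_eq_smul e he hQe hi hki.symm hki₀.symm (hc i) (hc i₀)]
    rfl
  exact ⟨c i₀, fun v => by simp [hscalar]⟩
end
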